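/- Let t = (t₁,t₂,t₃) ∈ ℕ³ and k = t₁+t₂+t₃+2. Then −∫₀¹ z·ln(z)·w(z) dz = H(t), where w(z) = Σ_{l=1}^{3} (k−t_l)·binom(k,t_l)·z^{t_l}·(1−z)^{k−t_l−1} and H(t) is the discrete entropy of t. -/

import Mathlib

/-!
Write `B(a,b) = ∫₀¹ xᵃ (1-x)ᵇ dx` and `L(a,b) = ∫₀¹ xᵃ (1-x)ᵇ ln x dx`. Differentiating
`x^(a+1) (1-x)^(b+1)` gives `(a+1) B(a,b+1) = (b+1) B(a+1,b)`, hence `B(a,b) = a! b! / (a+b+1)!`;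
differentiating `x^(a+1) (1-x)^(b+1) ln x` gives `(a+1) L(a,b+1) = (b+1) L(a+1,b) - B(a,b+1)`,
and with `H_{a+1} = H_a + 1/(a+1)` this yields `L(a,b) = B(a,b) (H_a - H_{a+b+1})` by induction on `b`.
Each summand of `z ln z · w(z)` is `(k-t) binom(k,t) z^(t+1) (1-z)^(k-t-1) ln z`, whose integral is
therefore `-(t+1)/(k+1) (H_{k+1} - H_{t+1})`.
-/

open Finset intervalIntegral

/-- The `n`-th harmonic number `H_n = ∑_{i=1}^n 1/i`. -/
noncomputable def harm (n : ℕ) : ℝ := ∑ i ∈ Finset.range n, (1 : ℝ) / (i + 1)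

/-- The discrete entropy `H(t)` of `t = (t₁,t₂,t₃)` with `k = t₁+t₂+t₃+2`. -/
noncomputable def Hdisc (t1 t2 t3 : ℕ) : ℝ :=
  ((t1 : ℝ) + 1) / ((t1 : ℝ) + t2 + t3 + 3) * (harm (t1 + t2 + t3 + 3) - harm (t1 + 1))
  + ((t2 : ℝ) + 1) / ((t1 : ℝ) + t2 + t3 + 3) * (harm (t1 + t2 + t3 + 3) - harm (t2 + 1))
  + ((t3 : ℝ) + 1) / ((t1 : ℝ) + t2 + t3 + 3) * (harm (t1 + t2 + t3 + 3) - harm (t3 + 1))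

/-- The shape function
`w(z) = ∑_{l=1}^3 (k−t_l) binom(k,t_l) z^{t_l} (1−z)^{k−t_l−1}`, `k = t₁+t₂+t₃+2`. -/
noncomputable def shapeW (t1 t2 t3 : ℕ) (z : ℝ) : ℝ :=
  (((t1 + t2 + t3 + 2) - t1 : ℕ) : ℝ) * ((t1 + t2 + t3 + 2).choose t1 : ℝ)
      * z ^ t1 * (1 - z) ^ ((t1 + t2 + t3 + 2) - t1 - 1)
  + (((t1 + t2 + t3 + 2) - t2 : ℕ) : ℝ) * ((t1 + t2 + t3 + 2).choose t2 : ℝ)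
      * z ^ t2 * (1 - z) ^ ((t1 + t2 + t3 + 2) - t2 - 1)
  + (((t1 + t2 + t3 + 2) - t3 : ℕ) : ℝ) * ((t1 + t2 + t3 + 2).choose t3 : ℝ)
      * z ^ t3 * (1 - z) ^ ((t1 + t2 + t3 + 2) - t3 - 1)

open Real Set
open scoped Nat

lemma harm_succ (n : ℕ) : harm (n + 1) = harm n + 1 / (n + 1) := by
  simp [harm, Finset.sum_range_succ]

lemma hasDerivAt_pow_succ_mul_one_sub_pow_succ (a b : ℕ) (x : ℝ) :
    HasDerivAt (fun x : ℝ => x ^ (a + 1) * (1 - x) ^ (b + 1))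
      ((a + 1) * (x ^ a * (1 - x) ^ (b + 1)) - (b + 1) * (x ^ (a + 1) * (1 - x) ^ b)) x := by
  refine ((hasDerivAt_pow (a + 1) x).mul
    (((hasDerivAt_id x).const_sub 1).fun_pow (b + 1))).congr_deriv ?_
  simp only [id, add_tsub_cancel_right]
  push_cast
  ring

lemma integral_pow_mul_one_sub_pow_succ (a b : ℕ) :
    ∫ x in (0 : ℝ)..1, x ^ a * (1 - x) ^ (b + 1)
      = (b + 1) / (a + 1) * ∫ x in (0 : ℝ)..1, x ^ (a + 1) * (1 - x) ^ b := by
  have hFTC := integral_eq_sub_of_hasDerivAt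
    (fun x _ => hasDerivAt_pow_succ_mul_one_sub_pow_succ a b x)
    (Continuous.intervalIntegrable (by fun_prop) 0 1)
  rw [integral_sub (Continuous.intervalIntegrable (by fun_prop) 0 1)
    (Continuous.intervalIntegrable (by fun_prop) 0 1), integral_const_mul,
    integral_const_mul] at hFTC
  norm_num at hFTC
  field_simp
  linarith

lemma integral_pow_mul_one_sub_pow (a b : ℕ) :
    ∫ x in (0 : ℝ)..1, x ^ a * (1 - x) ^ b = (a ! * b ! : ℝ) / (a + b + 1)! := by
  induction b generalizing a with
  | zero =>
    simp only [pow_zero, mul_one, integral_pow, Nat.factorial_succ]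
    push_cast
    field_simp
    ring
  | succ b ih =>
    rw [integral_pow_mul_one_sub_pow_succ, ih, show a + 1 + b + 1 = a + (b + 1) + 1 by ring]
    simp only [Nat.factorial_succ]
    push_cast
    field_simp

lemma continuous_pow_succ_mul_log (n : ℕ) : Continuous fun x : ℝ => x ^ (n + 1) * log x := by
  simpa only [pow_succ, mul_assoc] using (continuous_pow n).fun_mul continuous_mul_log

lemma intervalIntegrable_pow_mul_one_sub_pow_mul_log (a b : ℕ) :
    IntervalIntegrable (fun x : ℝ => x ^ a * (1 - x) ^ b * log x) MeasureTheory.volume 0 1 :=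
  intervalIntegrable_log'.continuousOn_mul (by fun_prop)

lemma integral_pow_mul_log (a : ℕ) :
    ∫ x in (0 : ℝ)..1, x ^ a * log x = -1 / (a + 1) ^ 2 := by
  have hderiv : ∀ x ∈ Ioo (0 : ℝ) 1, HasDerivAt
      (fun x => x ^ (a + 1) * log x / (a + 1) - x ^ (a + 1) / (a + 1) ^ 2) (x ^ a * log x) x := by
    intro x hx
    have hpow := hasDerivAt_pow (a + 1) x
    refine (((hpow.mul (hasDerivAt_log hx.1.ne')).div_const _).sub
      (hpow.div_const _)).congr_deriv ?_
    field_simp [hx.1.ne']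
    push_cast
    ring
  have hFTC := integral_eq_sub_of_hasDerivAt_of_le zero_le_one
    (((continuous_pow_succ_mul_log a).div_const _).sub (by fun_prop)).continuousOn hderiv
    (by simpa using intervalIntegrable_pow_mul_one_sub_pow_mul_log a 0)
  rw [hFTC]
  norm_num
  ring

lemma integral_pow_mul_one_sub_pow_succ_mul_log (a b : ℕ) :
    ∫ x in (0 : ℝ)..1, x ^ a * (1 - x) ^ (b + 1) * log x
      = ((b + 1) * (∫ x in (0 : ℝ)..1, x ^ (a + 1) * (1 - x) ^ b * log x)
          - ∫ x in (0 : ℝ)..1, x ^ a * (1 - x) ^ (b + 1)) / (a + 1) := by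
  have hderiv : ∀ x ∈ Ioo (0 : ℝ) 1, HasDerivAt
      (fun x => x ^ (a + 1) * (1 - x) ^ (b + 1) * log x)
      ((a + 1) * (x ^ a * (1 - x) ^ (b + 1) * log x)
        - (b + 1) * (x ^ (a + 1) * (1 - x) ^ b * log x) + x ^ a * (1 - x) ^ (b + 1)) x := by
    intro x hx
    refine ((hasDerivAt_pow_succ_mul_one_sub_pow_succ a b x).mul
      (hasDerivAt_log hx.1.ne')).congr_deriv ?_
    field_simp [hx.1.ne']
    ring
  have hcont : ContinuousOn (fun x : ℝ => x ^ (a + 1) * (1 - x) ^ (b + 1) * log x) (Icc 0 1) := by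
    refine Continuous.continuousOn (((continuous_pow_succ_mul_log a).fun_mul
      (by fun_prop : Continuous fun x : ℝ => (1 - x) ^ (b + 1))).congr fun x => ?_)
    ring
  have hL := intervalIntegrable_pow_mul_one_sub_pow_mul_log
  have hB : IntervalIntegrable (fun x : ℝ => x ^ a * (1 - x) ^ (b + 1)) MeasureTheory.volume 0 1 :=
    Continuous.intervalIntegrable (by fun_prop) 0 1
  have hFTC := integral_eq_sub_of_hasDerivAt_of_le zero_le_one hcont hderiv
    ((((hL a (b + 1)).const_mul _).sub ((hL (a + 1) b).const_mul _)).add hB)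
  rw [integral_add (((hL a (b + 1)).const_mul _).sub ((hL (a + 1) b).const_mul _)) hB,
    integral_sub ((hL a (b + 1)).const_mul _) ((hL (a + 1) b).const_mul _),
    integral_const_mul, integral_const_mul] at hFTC
  norm_num at hFTC
  field_simp
  linarith

lemma integral_pow_mul_one_sub_pow_mul_log (a b : ℕ) :
    ∫ x in (0 : ℝ)..1, x ^ a * (1 - x) ^ b * log x
      = (∫ x in (0 : ℝ)..1, x ^ a * (1 - x) ^ b) * (harm a - harm (a + b + 1)) := by
  induction b generalizing a with
  | zero =>
    simp only [pow_zero, mul_one, add_zero, integral_pow_mul_log, integral_pow, harm_succ]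
    field_simp
    ring
  | succ b ih =>
    rw [integral_pow_mul_one_sub_pow_succ_mul_log, ih, integral_pow_mul_one_sub_pow_succ a b,
      harm_succ a, show a + 1 + b + 1 = a + (b + 1) + 1 by ring]
    field_simp
    ring

lemma sub_mul_choose_mul_factorial_mul_factorial {k t : ℕ} (h : t < k) :
    (k - t) * k.choose t * (t + 1)! * (k - t - 1)! = (t + 1) * k ! := by
  rw [← Nat.choose_mul_factorial_mul_factorial h.le, Nat.factorial_succ,
    show k - t = (k - t - 1) + 1 by omega, Nat.factorial_succ (k - t - 1)]
  simp only [add_tsub_cancel_right]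
  ring

noncomputable def shapeTerm (k t : ℕ) (z : ℝ) : ℝ :=
  ((k - t : ℕ) : ℝ) * (k.choose t : ℝ) * z ^ t * (1 - z) ^ (k - t - 1)

lemma integral_mul_log_mul_shapeTerm {k t : ℕ} (h : t < k) :
    ∫ z in (0 : ℝ)..1, z * log z * shapeTerm k t z
      = -((t + 1) / (k + 1) * (harm (k + 1) - harm (t + 1))) := by
  have hintegrand : ∀ z : ℝ, z * log z * shapeTerm k t z
      = ((k - t : ℕ) : ℝ) * k.choose t * (z ^ (t + 1) * (1 - z) ^ (k - t - 1) * log z) := by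
    intro z
    rw [shapeTerm, pow_succ]
    ring
  have hcoeff : ((k - t : ℕ) : ℝ) * k.choose t * (t + 1)! * (k - t - 1)! = (t + 1) * k ! := by
    exact_mod_cast sub_mul_choose_mul_factorial_mul_factorial h
  simp_rw [hintegrand]
  rw [integral_const_mul, integral_pow_mul_one_sub_pow_mul_log, integral_pow_mul_one_sub_pow,
    show t + 1 + (k - t - 1) + 1 = k + 1 by omega, Nat.factorial_succ k]
  push_cast
  field_simp
  linear_combination (harm (t + 1) - harm (k + 1)) * hcoeff

/-- `−∫₀¹ z ln(z) w(z) dz = H(t)`: the logarithmic moment of the shape function equals the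
discrete entropy. -/
theorem stmt14 (t1 t2 t3 : ℕ) :
    -∫ z in (0 : ℝ)..1, z * Real.log z * shapeW t1 t2 t3 z = Hdisc t1 t2 t3 := by
  set k := t1 + t2 + t3 + 2 with hk
  have hint (t : ℕ) :
      IntervalIntegrable (fun z => z * log z * shapeTerm k t z) MeasureTheory.volume 0 1 :=
    (continuous_mul_log.mul (by unfold shapeTerm; fun_prop)).intervalIntegrable 0 1
  have hsplit : ∀ z : ℝ, z * log z * shapeW t1 t2 t3 z = z * log z * shapeTerm k t1 z
      + z * log z * shapeTerm k t2 z + z * log z * shapeTerm k t3 z := by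
    intro z
    simp only [shapeW, shapeTerm]
    ring
  simp_rw [hsplit]
  rw [integral_add ((hint t1).add (hint t2)) (hint t3), integral_add (hint t1) (hint t2),
    integral_mul_log_mul_shapeTerm (by omega), integral_mul_log_mul_shapeTerm (by omega),
    integral_mul_log_mul_shapeTerm (by omega)]
  simp only [Hdisc, hk]
  push_cast
  ring
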